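/- (Čech cup-product computation.) Let I be an index set, and let a : I × I → A and b : I × I → B be families satisfying the 1-cocycle conditions a(i,j) + a(j,k) = a(i,k) and b(i,j) + b(j,k) = b(i,k) for all i, j, k ∈ I. Set α(i,j) = (a(i,j), b(i,j), 0) ∈ H_{A,B}. Then for all i, j, k ∈ I: α(i,j) * α(j,k) * α(i,k)^{-1} = (0, 0, a(i,j) ⊗ b(j,k)). -/

import Mathlib

open TensorProduct

/-- The Heisenberg multiplication on `A × B × (A ⊗[ℤ] B)`:
`(a, b, t) * (a', b', t') = (a + a', b + b', t + t' + a ⊗ b')`. -/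
noncomputable def heisMul {A B : Type*} [AddCommGroup A] [AddCommGroup B]
    (x y : A × B × (A ⊗[ℤ] B)) : A × B × (A ⊗[ℤ] B) :=
  (x.1 + y.1, x.2.1 + y.2.1, x.2.2 + y.2.2 + x.1 ⊗ₜ[ℤ] y.2.1)

/-- The inverse in the Heisenberg group: `(a, b, t)⁻¹ = (-a, -b, -t + a ⊗ b)`. -/
noncomputable def heisInv {A B : Type*} [AddCommGroup A] [AddCommGroup B]
    (x : A × B × (A ⊗[ℤ] B)) : A × B × (A ⊗[ℤ] B) :=
  (-x.1, -x.2.1, -x.2.2 + x.1 ⊗ₜ[ℤ] x.2.1)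

theorem heisMul_heisMul_heisInv_add {A B : Type*} [AddCommGroup A] [AddCommGroup B]
    (a a' : A) (b b' : B) (t t' t'' : A ⊗[ℤ] B) :
    heisMul (heisMul (a, b, t) (a', b', t')) (heisInv (a + a', b + b', t''))
      = (0, 0, t + t' - t'' + a ⊗ₜ[ℤ] b') := by
  simp only [heisMul, heisInv, tmul_neg, Prod.mk.injEq]
  refine ⟨by abel, by abel, by abel⟩

/-- Čech cup-product computation: for 1-cocycles `a`, `b` and
`α(i,j) = (a(i,j), b(i,j), 0)`, one has
`α(i,j) * α(j,k) * α(i,k)⁻¹ = (0, 0, a(i,j) ⊗ b(j,k))`. -/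
theorem heis_cech_cup (A B : Type*) [AddCommGroup A] [AddCommGroup B]
    {I : Type*} (a : I × I → A) (b : I × I → B)
    (ha : ∀ i j k : I, a (i, j) + a (j, k) = a (i, k))
    (hb : ∀ i j k : I, b (i, j) + b (j, k) = b (i, k)) :
    ∀ i j k : I,
      heisMul (heisMul (a (i, j), b (i, j), (0 : A ⊗[ℤ] B))
          (a (j, k), b (j, k), (0 : A ⊗[ℤ] B)))
        (heisInv (a (i, k), b (i, k), (0 : A ⊗[ℤ] B)))
      = ((0 : A), (0 : B), a (i, j) ⊗ₜ[ℤ] b (j, k)) := by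
  intro i j k
  rw [← ha i j k, ← hb i j k, heisMul_heisMul_heisInv_add]
  simp
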